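/- arXiv:2111.11713 — 4 statements merged into one kernel-verified Lean document; each statement's English description precedes it below -/
import Mathlib

section
/- Let H be a complex Hilbert space, Q ⊆ ℂⁿ a complete circular domain centered at 0, and suppose f : Q → 𝓑(H) has a homogeneous polynomial expansion f(z) = ∑_{k=0}^∞ P_k(z) converging at every z ∈ Q, with ‖f(z)‖ < 1 for all z ∈ Q and f(0) = a₀·I for some a₀ ∈ ℂ with |a₀| < 1. Then ∑_{k=0}^∞ ‖P_k(z)‖ < 1 for every point z of the homothetic domain (1/3)Q, i.e. for every z = (1/3)·w with w ∈ Q. -/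
/-!
On the complex line through `w` the expansion becomes `f(ξw) = ∑ₖ ξᵏ cₖ` with `cₖ = Pₖ(w)`, an
operator-valued function bounded by one on the unit disc, and `Pₖ(w/3) = 3⁻ᵏ cₖ`.
Composing it with the operator Möbius map `T ↦ (a₀ - T)(1 - ā₀T)⁻¹`, which maps the closed unit
ball into itself and `a₀ I` to `0`, the Schwarz lemma gives `‖c₁‖ ≤ 1 - |a₀|²`. Averaging over
the `k`-th roots of unity shows that `∑ₘ ηᵐ c_{mk}` is again bounded by one, so
`‖cₖ‖ ≤ 1 - |a₀|²` for every `k ≥ 1`, and `∑ₖ ‖Pₖ(w/3)‖ ≤ |a₀| + (1 - |a₀|²)/2 < 1`.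
-/

open Metric Set ComplexConjugate

theorem apply_smul_eq_pow_smul_of_hasSum_monomials {R M ι : Type*} [CommSemiring R]
    [AddCommMonoid M] [TopologicalSpace M] [T2Space M] [Module R M] [ContinuousConstSMul R M]
    [Fintype ι] {k : ℕ} {A : (ι → ℕ) → M} {p : (ι → R) → M}
    (hp : ∀ z, HasSum (fun α : {α : ι → ℕ // ∑ i, α i = k} => (∏ i, z i ^ α.1 i) • A α.1) (p z))
    (ξ : R) (z : ι → R) : p (ξ • z) = ξ ^ k • p z := by
  refine (hp (ξ • z)).unique ?_
  convert (hp z).const_smul (ξ ^ k) using 2 with α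
  obtain ⟨α, rfl⟩ := α
  rw [smul_smul, ← Finset.prod_pow_eq_pow_sum, ← Finset.prod_mul_distrib]
  simp only [Pi.smul_apply, smul_eq_mul, mul_pow]

theorem IsPrimitiveRoot.geom_sum_pow_eq_ite {K : Type*} [Field K] {ω : K} {k : ℕ}
    (hω : IsPrimitiveRoot ω k) (m : ℕ) :
    ∑ j ∈ Finset.range k, (ω ^ m) ^ j = if k ∣ m then (k : K) else 0 := by
  split_ifs with hdvd
  · simp [(hω.pow_eq_one_iff_dvd m).2 hdvd]
  · have hne : ω ^ m ≠ 1 := fun h => hdvd ((hω.pow_eq_one_iff_dvd m).1 h)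
    rw [geom_sum_eq hne, ← pow_mul, mul_comm, pow_mul, hω.pow_eq_one, one_pow, sub_self,
      zero_div]

theorem hasSum_comp_mul_right_iff {M : Type*} [AddCommMonoid M] [TopologicalSpace M]
    {f : ℕ → M} {k : ℕ} (hk : k ≠ 0) (hf : ∀ m, ¬k ∣ m → f m = 0) {a : M} :
    HasSum (fun m => f (m * k)) a ↔ HasSum f a := by
  exact Function.Injective.hasSum_iff (fun _ _ h => Nat.eq_of_mul_eq_mul_right
    (Nat.pos_of_ne_zero hk) h) fun m hm => hf m fun ⟨l, hl⟩ => hm ⟨l, by rw [hl, mul_comm]⟩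

section PowerSeries

variable {E : Type*} [NormedAddCommGroup E] [NormedSpace ℂ E]

theorem IsPrimitiveRoot.hasSum_pow_smul_comp_mul {ω ξ : ℂ} {k : ℕ} (hω : IsPrimitiveRoot ω k)
    (hk : k ≠ 0) {c : ℕ → E} {S : ℕ → E}
    (hS : ∀ j, HasSum (fun m => (ω ^ j * ξ) ^ m • c m) (S j)) :
    HasSum (fun m => (ξ ^ k) ^ m • c (m * k)) ((k : ℂ)⁻¹ • ∑ j ∈ Finset.range k, S j) := by
  have hfilter : ∀ m, (k : ℂ)⁻¹ * ∑ j ∈ Finset.range k, (ω ^ j * ξ) ^ m =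
      if k ∣ m then ξ ^ m else 0 := by
    intro m
    simp_rw [mul_pow, ← pow_mul, mul_comm _ m, pow_mul]
    rw [← Finset.sum_mul, hω.geom_sum_pow_eq_ite]
    split_ifs
    · field_simp
    · simp
  have havg := (hasSum_sum fun j (_ : j ∈ Finset.range k) => hS j).const_smul (k : ℂ)⁻¹
  simp_rw [← Finset.sum_smul, smul_smul, hfilter] at havg
  rw [← hasSum_comp_mul_right_iff hk fun m hm => by simp [hm]] at havg
  simpa [← pow_mul, mul_comm k] using havg

theorem hasFPowerSeriesOnBall_tsum_pow_smul {c : ℕ → E}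
    (hc : ∀ η : ℂ, ‖η‖ < 1 → Summable fun m => η ^ m • c m) :
    HasFPowerSeriesOnBall (fun η => ∑' m, η ^ m • c m)
      (fun m => ContinuousMultilinearMap.mkPiRing ℂ (Fin m) (c m)) 0 1 := by
  refine ⟨?_, one_pos, fun {y} hy => ?_⟩
  · refine ENNReal.le_of_forall_nnreal_lt fun r hr => ?_
    have hr1 : ‖((r : ℝ) : ℂ)‖ < 1 := by simpa using hr
    refine FormalMultilinearSeries.le_radius_of_tendsto _ (l := 0) ?_
    simpa [ContinuousMultilinearMap.norm_mkPiRing, norm_smul, mul_comm] using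
      (hc _ hr1).tendsto_atTop_zero.norm
  · have hy1 : ‖y‖ < 1 := by simpa [enorm_eq_nnnorm, ← NNReal.coe_lt_coe] using hy
    simpa [ContinuousMultilinearMap.mkPiRing_apply] using (hc y hy1).hasSum

/-- `η ↦ ∑ₘ ηᵐ cₘ` is a Schur-class function on the open unit disc. -/
def IsSchurSeries (c : ℕ → E) : Prop :=
  ∀ η : ℂ, ‖η‖ < 1 → ∃ S, HasSum (fun m => η ^ m • c m) S ∧ ‖S‖ ≤ 1

namespace IsSchurSeries

variable {c : ℕ → E}

theorem hasSum_tsum (hc : IsSchurSeries c) {η : ℂ} (hη : ‖η‖ < 1) :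
    HasSum (fun m => η ^ m • c m) (∑' m, η ^ m • c m) :=
  let ⟨_, hS, _⟩ := hc η hη; hS.summable.hasSum

theorem norm_tsum_le (hc : IsSchurSeries c) {η : ℂ} (hη : ‖η‖ < 1) :
    ‖∑' m, η ^ m • c m‖ ≤ 1 :=
  let ⟨_, hS, hS1⟩ := hc η hη; hS.tsum_eq ▸ hS1

theorem comp_mul (hc : IsSchurSeries c) {k : ℕ} (hk : k ≠ 0) :
    IsSchurSeries fun m => c (m * k) := by
  intro η hη
  obtain ⟨ξ, rfl⟩ := IsAlgClosed.exists_pow_nat_eq η (Nat.pos_of_ne_zero hk)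
  have hξ : ‖ξ‖ < 1 := by
    rw [norm_pow] at hη
    exact (pow_lt_one_iff_of_nonneg (norm_nonneg _) hk).1 hη
  have hω := Complex.isPrimitiveRoot_exp k hk
  have hrot : ∀ j : ℕ, ‖Complex.exp (2 * Real.pi * Complex.I / k) ^ j * ξ‖ < 1 := by
    simpa [norm_pow, hω.norm'_eq_one hk] using hξ
  refine ⟨_, hω.hasSum_pow_smul_comp_mul hk fun j => hc.hasSum_tsum (hrot j), ?_⟩
  calc ‖(k : ℂ)⁻¹ • ∑ j ∈ Finset.range k, ∑' m, _‖
      ≤ (k : ℝ)⁻¹ * ∑ _j ∈ Finset.range k, (1 : ℝ) := by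
        rw [norm_smul, norm_inv, Complex.norm_natCast]
        gcongr
        exact (norm_sum_le _ _).trans (Finset.sum_le_sum fun j _ => hc.norm_tsum_le (hrot j))
    _ = 1 := by simp [hk]

end IsSchurSeries

end PowerSeries

theorem ContinuousLinearMap.norm_smul_one_le {𝕜 E : Type*} [NontriviallyNormedField 𝕜]
    [SeminormedAddCommGroup E] [NormedSpace 𝕜 E] (a : 𝕜) : ‖a • (1 : E →L[𝕜] E)‖ ≤ ‖a‖ :=
  (norm_smul_le _ _).trans (mul_le_of_le_one_right (norm_nonneg a) norm_id_le)

section Moebius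

variable {H : Type*} [NormedAddCommGroup H] [InnerProductSpace ℂ H]

/-- `Ring.inverse` is `0` on non-units; `1 - ā T` is a unit when `‖a‖ < 1` and `‖T‖ ≤ 1`
(`isUnit_one_sub_conj_smul`). -/
noncomputable def moebiusOp (a : ℂ) (T : H →L[ℂ] H) : H →L[ℂ] H :=
  (a • 1 - T) * Ring.inverse (1 - conj a • T)

theorem norm_smul_one_sub_apply_le {T : H →L[ℂ] H} (hT : ‖T‖ ≤ 1) {a : ℂ} (ha : ‖a‖ ≤ 1)
    (x : H) : ‖(a • 1 - T) x‖ ≤ ‖(1 - conj a • T) x‖ := by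
  have hTx : ‖T x‖ ≤ ‖x‖ := by simpa using T.le_of_opNorm_le hT x
  have key : ‖x - conj a • T x‖ ^ 2 - ‖a • x - T x‖ ^ 2 =
      (1 - ‖a‖ ^ 2) * (‖x‖ ^ 2 - ‖T x‖ ^ 2) := by
    rw [norm_sub_sq (𝕜 := ℂ), norm_sub_sq (𝕜 := ℂ), inner_smul_left, inner_smul_right,
      norm_smul, norm_smul, Complex.norm_conj]
    ring
  have hnonneg : 0 ≤ (1 - ‖a‖ ^ 2) * (‖x‖ ^ 2 - ‖T x‖ ^ 2) :=
    mul_nonneg (by nlinarith [norm_nonneg a]) (by nlinarith [norm_nonneg (T x)])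
  simp only [sub_apply, smul_apply, one_apply_eq_self]
  exact (sq_le_sq₀ (norm_nonneg _) (norm_nonneg _)).1 (by linarith)

theorem isUnit_one_sub_conj_smul [CompleteSpace H] {a : ℂ} (ha : ‖a‖ < 1) {T : H →L[ℂ] H}
    (hT : ‖T‖ ≤ 1) : IsUnit (1 - conj a • T) :=
  isUnit_one_sub_of_norm_lt_one <| (norm_smul_le _ _).trans_lt <| by
    rw [Complex.norm_conj]
    exact mul_lt_one_of_nonneg_of_lt_one_left (norm_nonneg a) ha hT

theorem norm_moebiusOp_le [CompleteSpace H] {a : ℂ} (ha : ‖a‖ < 1) {T : H →L[ℂ] H}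
    (hT : ‖T‖ ≤ 1) : ‖moebiusOp a T‖ ≤ 1 := by
  obtain ⟨u, hu⟩ := isUnit_one_sub_conj_smul ha hT
  refine ContinuousLinearMap.opNorm_le_bound _ zero_le_one fun y => ?_
  set x := (↑u⁻¹ : H →L[ℂ] H) y
  have hy : (1 - conj a • T) x = y := by
    rw [← hu, ← mul_apply_eq_comp, u.mul_inv, one_apply_eq_self]
  calc ‖moebiusOp a T y‖ = ‖(a • 1 - T) x‖ := by
        rw [moebiusOp, ← hu, Ring.inverse_unit]
        rfl
    _ ≤ ‖(1 - conj a • T) x‖ := norm_smul_one_sub_apply_le hT ha.le x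
    _ = 1 * ‖y‖ := by rw [hy, one_mul]

theorem moebiusOp_smul_one (a : ℂ) : moebiusOp a (a • 1 : H →L[ℂ] H) = 0 := by
  simp [moebiusOp]

variable [CompleteSpace H] {Φ : ℂ → H →L[ℂ] H} {z a : ℂ}

theorem DifferentiableAt.inverse_one_sub_conj_smul (hΦ : DifferentiableAt ℂ Φ z)
    (ha : ‖a‖ < 1) (hz : ‖Φ z‖ ≤ 1) :
    DifferentiableAt ℂ (fun η => Ring.inverse (1 - conj a • Φ η)) z := by
  have hden : DifferentiableAt ℂ (fun η => 1 - conj a • Φ η) z := by fun_prop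
  exact (differentiableAt_inverse (𝕜 := ℂ) (isUnit_one_sub_conj_smul ha hz)).comp z hden

theorem DifferentiableAt.moebiusOp (hΦ : DifferentiableAt ℂ Φ z) (ha : ‖a‖ < 1)
    (hz : ‖Φ z‖ ≤ 1) : DifferentiableAt ℂ (fun η => moebiusOp a (Φ η)) z :=
  (hΦ.const_sub _).mul (hΦ.inverse_one_sub_conj_smul ha hz)

/-- Since `moebiusOp a` vanishes at `a • 1`, only the derivative of its numerator contributes. -/
theorem HasDerivAt.moebiusOp {Φ' : H →L[ℂ] H} (hΦ : HasDerivAt Φ Φ' z) (ha : ‖a‖ < 1)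
    (hz : Φ z = a • 1) :
    HasDerivAt (fun η => moebiusOp a (Φ η)) (-((1 - ‖a‖ ^ 2 : ℝ) : ℂ)⁻¹ • Φ') z := by
  have hr : ((1 - ‖a‖ ^ 2 : ℝ) : ℂ) ≠ 0 := by
    have := norm_nonneg a
    exact_mod_cast (by nlinarith : (0 : ℝ) < 1 - ‖a‖ ^ 2).ne'
  have hden : 1 - conj a • Φ z = ((1 - ‖a‖ ^ 2 : ℝ) : ℂ) • 1 := by
    rw [hz, smul_smul, Complex.conj_mul']
    push_cast
    rw [sub_smul, one_smul]
  have hΦz : ‖Φ z‖ ≤ 1 := hz ▸ (ContinuousLinearMap.norm_smul_one_le a).trans ha.le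
  have hinv : Ring.inverse (1 - conj a • Φ z) = ((1 - ‖a‖ ^ 2 : ℝ) : ℂ)⁻¹ • 1 := by
    rw [← mul_one (Ring.inverse _),
      Ring.inverse_mul_eq_iff_eq_mul _ _ _ (isUnit_one_sub_conj_smul ha hΦz), hden,
      smul_mul_smul_comm, mul_inv_cancel₀ hr, one_smul, one_mul]
  have hd := (hΦ.const_sub (a • 1)).mul
    (hΦ.differentiableAt.inverse_one_sub_conj_smul ha hΦz).hasDerivAt
  refine (hd.congr_deriv ?_ : HasDerivAt (fun η => _root_.moebiusOp a (Φ η)) _ z)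
  rw [hinv, hz, sub_self, zero_mul, add_zero, neg_mul, mul_smul_comm, mul_one, neg_smul]

end Moebius

namespace IsSchurSeries

variable {H : Type*} [NormedAddCommGroup H] [InnerProductSpace ℂ H] [CompleteSpace H]
  {c : ℕ → H →L[ℂ] H} {a : ℂ}

theorem norm_coeff_one_le (hc : IsSchurSeries c) (ha : ‖a‖ < 1) (h0 : c 0 = a • 1) :
    ‖c 1‖ ≤ 1 - ‖a‖ ^ 2 := by
  set Φ : ℂ → H →L[ℂ] H := fun η => ∑' m, η ^ m • c m
  have hps : HasFPowerSeriesOnBall Φ _ 0 1 :=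
    hasFPowerSeriesOnBall_tsum_pow_smul fun η hη => (hc.hasSum_tsum hη).summable
  have hΦ0 : Φ 0 = a • 1 := by
    rw [← hps.coeff_zero ![], ← h0]
    simp [ContinuousMultilinearMap.mkPiRing_apply]
  have hΦ' : HasDerivAt Φ (c 1) 0 := by
    simpa [ContinuousMultilinearMap.mkPiRing_apply] using hps.hasFPowerSeriesAt.hasDerivAt
  have hΨ' := hΦ'.moebiusOp ha hΦ0
  have hdiff : DifferentiableOn ℂ (fun η => moebiusOp a (Φ η)) (ball 0 1) := by
    intro η hη
    have hη' : η ∈ eball (0 : ℂ) 1 := by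
      rwa [← ENNReal.coe_one, eball_coe, NNReal.coe_one]
    exact ((hps.analyticAt_of_mem hη').differentiableAt.moebiusOp ha
      (hc.norm_tsum_le (mem_ball_zero_iff.1 hη))).differentiableWithinAt
  have hmaps : MapsTo (fun η => moebiusOp a (Φ η)) (ball 0 1)
      (closedBall (moebiusOp a (Φ 0)) 1) := by
    intro η hη
    rw [mem_closedBall, hΦ0, moebiusOp_smul_one, dist_zero_right]
    exact norm_moebiusOp_le ha (hc.norm_tsum_le (mem_ball_zero_iff.1 hη))
  have hr : 0 < 1 - ‖a‖ ^ 2 := by nlinarith [norm_nonneg a]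
  have hschwarz := Complex.norm_deriv_le_one_of_mapsTo_ball hdiff hmaps one_pos
  rwa [hΨ'.deriv, norm_smul, norm_neg, norm_inv, Complex.norm_real, Real.norm_of_nonneg hr.le,
    inv_mul_le_iff₀ hr, mul_one] at hschwarz

theorem norm_coeff_le (hc : IsSchurSeries c) (ha : ‖a‖ < 1) (h0 : c 0 = a • 1) {k : ℕ}
    (hk : k ≠ 0) : ‖c k‖ ≤ 1 - ‖a‖ ^ 2 := by
  simpa using (hc.comp_mul hk).norm_coeff_one_le ha (by simpa using h0)

end IsSchurSeries

theorem summable_and_tsum_third_pow_mul_lt_one {b : ℕ → ℝ} {a : ℝ} (hb : ∀ k, 0 ≤ b k)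
    (hb0 : b 0 ≤ a) (ha : a < 1) (hbk : ∀ k, k ≠ 0 → b k ≤ 1 - a ^ 2) :
    Summable (fun k => (3 : ℝ)⁻¹ ^ k * b k) ∧ ∑' k, (3 : ℝ)⁻¹ ^ k * b k < 1 := by
  have hgeom : HasSum (fun k => (1 - a ^ 2) / 3 * (3 : ℝ)⁻¹ ^ k) ((1 - a ^ 2) / 2) := by
    have h := (hasSum_geometric_of_lt_one (r := (3 : ℝ)⁻¹) (by norm_num) (by norm_num)).mul_left
      ((1 - a ^ 2) / 3)
    rwa [show (1 - a ^ 2) / 3 * (1 - (3 : ℝ)⁻¹)⁻¹ = (1 - a ^ 2) / 2 by ring] at h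
  have htail_le : ∀ k, (3 : ℝ)⁻¹ ^ (k + 1) * b (k + 1) ≤ (1 - a ^ 2) / 3 * (3 : ℝ)⁻¹ ^ k := by
    intro k
    calc (3 : ℝ)⁻¹ ^ (k + 1) * b (k + 1) = b (k + 1) / 3 * (3 : ℝ)⁻¹ ^ k := by ring
      _ ≤ (1 - a ^ 2) / 3 * (3 : ℝ)⁻¹ ^ k := by
        gcongr
        exact hbk _ k.succ_ne_zero
  have htail : Summable fun k => (3 : ℝ)⁻¹ ^ (k + 1) * b (k + 1) :=
    Summable.of_nonneg_of_le (fun k => mul_nonneg (by positivity) (hb _)) htail_le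
      hgeom.summable
  have hsum : Summable fun k => (3 : ℝ)⁻¹ ^ k * b k := (summable_nat_add_iff 1).1 htail
  refine ⟨hsum, ?_⟩
  have htail_tsum := (htail.tsum_le_tsum htail_le hgeom.summable).trans_eq hgeom.tsum_eq
  rw [hsum.tsum_eq_zero_add, pow_zero, one_mul]
  -- `a + (1 - a²) / 2 = 1 - (1 - a)² / 2`
  nlinarith [pow_pos (sub_pos.2 ha) 2]

theorem bohr_multidim_one_third_general
    {H : Type*} [NormedAddCommGroup H] [InnerProductSpace ℂ H] [CompleteSpace H]
    {n : ℕ} (Q : Set (Fin n → ℂ))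
    (hQcirc : ∀ z ∈ Q, ∀ ξ : ℂ, ‖ξ‖ ≤ 1 → ξ • z ∈ Q)
    (f : (Fin n → ℂ) → (H →L[ℂ] H))
    (P : ℕ → (Fin n → ℂ) → (H →L[ℂ] H))
    (A : (Fin n → ℕ) → (H →L[ℂ] H))
    (hP : ∀ (k : ℕ) (z : Fin n → ℂ),
      HasSum (fun α : {α : Fin n → ℕ // ∑ i, α i = k} =>
        (∏ i, z i ^ α.1 i) • A α.1) (P k z))
    (hexp : ∀ z ∈ Q, HasSum (fun k => P k z) (f z))
    (hlt : ∀ z ∈ Q, ‖f z‖ < 1)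
    (a₀ : ℂ) (ha₀ : ‖a₀‖ < 1)
    (hf0 : f 0 = a₀ • (1 : H →L[ℂ] H))
    (w : Fin n → ℂ) (hw : w ∈ Q) :
    Summable (fun k => ‖P k (((3 : ℂ)⁻¹) • w)‖) ∧
      ∑' k, ‖P k (((3 : ℂ)⁻¹) • w)‖ < 1 := by
  set c : ℕ → H →L[ℂ] H := fun k => P k w
  have hhom : ∀ k (ξ : ℂ), P k (ξ • w) = ξ ^ k • c k := fun k ξ =>
    apply_smul_eq_pow_smul_of_hasSum_monomials (hP k) ξ w
  have hline : ∀ ξ : ℂ, ‖ξ‖ ≤ 1 → HasSum (fun k => ξ ^ k • c k) (f (ξ • w)) := fun ξ hξ => by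
    simpa only [hhom] using hexp _ (hQcirc w hw ξ hξ)
  have hschur : IsSchurSeries c := fun η hη =>
    ⟨_, hline η hη.le, (hlt _ (hQcirc w hw η hη.le)).le⟩
  have hc0 : c 0 = a₀ • 1 := by
    have h := hline 0 (by simp)
    rw [zero_smul, hf0] at h
    have hc : HasSum (fun k => (0 : ℂ) ^ k • c k) (c 0) := by
      simpa using hasSum_single (f := fun k => (0 : ℂ) ^ k • c k) 0 fun k hk => by simp [hk]
    exact hc.unique h
  have hnorm : ∀ k, ‖P k ((3 : ℂ)⁻¹ • w)‖ = (3 : ℝ)⁻¹ ^ k * ‖c k‖ := fun k => by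
    rw [hhom, norm_smul, norm_pow, norm_inv]
    norm_num
  simp only [hnorm]
  exact summable_and_tsum_third_pow_mul_lt_one (fun k => norm_nonneg _)
    (hc0 ▸ ContinuousLinearMap.norm_smul_one_le a₀) ha₀ fun k hk => hschur.norm_coeff_le ha₀ hc0 hk

/-- Multidimensional operator valued Bohr inequality on a complete circular domain:
if `f(z) = ∑ₖ Pₖ(z)` (with `Pₖ(z) = ∑_{|α|=k} A_α z^α`) converges on `Q`,
`‖f(z)‖ < 1` on `Q` and `f(0) = a₀ I` with `|a₀| < 1`, then
`∑ₖ ‖Pₖ(z)‖ < 1` on the homothetic domain `(1/3)Q`. -/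
theorem bohr_multidim_one_third
    {H : Type*} [NormedAddCommGroup H] [InnerProductSpace ℂ H] [CompleteSpace H]
    {n : ℕ} (Q : Set (Fin n → ℂ))
    (hQopen : IsOpen Q) (hQconn : IsConnected Q) (hQ0 : (0 : Fin n → ℂ) ∈ Q)
    (hQcirc : ∀ z ∈ Q, ∀ ξ : ℂ, ‖ξ‖ ≤ 1 → ξ • z ∈ Q)
    (f : (Fin n → ℂ) → (H →L[ℂ] H))
    (P : ℕ → (Fin n → ℂ) → (H →L[ℂ] H))
    (A : (Fin n → ℕ) → (H →L[ℂ] H))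
    (hP : ∀ (k : ℕ) (z : Fin n → ℂ),
      HasSum (fun α : {α : Fin n → ℕ // ∑ i, α i = k} =>
        (∏ i, z i ^ α.1 i) • A α.1) (P k z))
    (hexp : ∀ z ∈ Q, HasSum (fun k => P k z) (f z))
    (hlt : ∀ z ∈ Q, ‖f z‖ < 1)
    (a₀ : ℂ) (ha₀ : ‖a₀‖ < 1)
    (hf0 : f 0 = a₀ • (1 : H →L[ℂ] H))
    (w : Fin n → ℂ) (hw : w ∈ Q) :
    Summable (fun k => ‖P k (((3 : ℂ)⁻¹) • w)‖) ∧
      ∑' k, ‖P k (((3 : ℂ)⁻¹) • w)‖ < 1 :=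
  bohr_multidim_one_third_general Q hQcirc f P A hP hexp hlt a₀ ha₀ hf0 w hw
end

section
/- Let H be a complex Hilbert space, Q ⊆ ℂⁿ a complete circular domain centered at 0, and suppose f : Q → 𝓑(H) has a homogeneous polynomial expansion f(z) = ∑_{k=0}^∞ P_k(z) converging at every z ∈ Q, with ‖f(z)‖ < 1 for all z ∈ Q and f(0) = a₀·I for some a₀ ∈ ℂ with |a₀| < 1; assume also that ∑_{k=1}^∞ k‖P_k(z)‖² converges at every z ∈ Q. Let l ≥ 1 and let G(w) = c₁w + c₂w² + ⋯ + c_l w^l be a polynomial with nonnegative real coefficients satisfying 8c₁(3/8)² + 24c₂(3/8)⁴ + ⋯ + 8(2l−1)c_l(3/8)^{2l} ≤ 1, i.e. ∑_{m=1}^l 8(2m−1)c_m(3/8)^{2m} ≤ 1. Then for every w ∈ Q and every r ∈ [0,1/3], the point z = r·w satisfies ∑_{k=0}^∞ ‖P_k(z)‖ + G(∑_{k=1}^∞ k‖P_k(z)‖²) ≤ 1. -/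
/-!
Homogeneity gives `P_k(ξ w) = ξ^k P_k(w)`, so `ξ ↦ f(ξ w)` is an operator-valued power series on
the closed unit disc with coefficients `P_k(w)`, norm at most `1` and constant term `a₀ I`.
Averaging it over the `k`-th roots of unity isolates `v(ζ) = ∑ₘ ζᵐ P_{mk}(w)`, still bounded by
`1`, and the Schwarz lemma applied to the Möbius transform `(v - a₀)(1 - ā₀ v)⁻¹` gives the
Wiener-type bound `‖P_k(w)‖ = ‖v'(0)‖ ≤ 1 - |a₀|²`. For `r ≤ 1/3` this yields
`∑ ‖P_k(rw)‖ ≤ |a₀| + (1 - |a₀|²)/2` and `∑ k ‖P_k(rw)‖² ≤ (3/8)² (1 - |a₀|²)²`, and the condition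
on the `c_m` bounds `G` of the latter by `(1 - |a₀|)²/2`, which is exactly the remaining slack.
-/

open Metric Finset

theorem apply_smul_eq_pow_smul_of_hasSum_monomials_s5 {𝕜 E : Type*} [NormedField 𝕜]
    [NormedAddCommGroup E] [NormedSpace 𝕜 E] {n k : ℕ} {A : (Fin n → ℕ) → E}
    {p : (Fin n → 𝕜) → E}
    (hp : ∀ z, HasSum (fun α : {α : Fin n → ℕ // ∑ i, α i = k} =>
      (∏ i, z i ^ α.1 i) • A α.1) (p z)) (ξ : 𝕜) (z : Fin n → 𝕜) :
    p (ξ • z) = ξ ^ k • p z := by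
  refine (hp (ξ • z)).unique ?_
  convert (hp z).const_smul (ξ ^ k) using 2 with α
  simp only [Pi.smul_apply, smul_eq_mul, mul_pow, prod_mul_distrib, prod_pow_eq_pow_sum, α.2,
    smul_smul]

theorem hasSum_zero_pow_smul {𝕜 E : Type*} [NormedField 𝕜] [NormedAddCommGroup E]
    [NormedSpace 𝕜 E] (T : ℕ → E) : HasSum (fun m => (0 : 𝕜) ^ m • T m) (T 0) := by
  convert hasSum_single (f := fun m => (0 : 𝕜) ^ m • T m) 0 fun m hm => by simp [hm] using 1
  simp

theorem IsPrimitiveRoot.sum_range_pow_pow_eq {R : Type*} [CommRing R] [IsDomain R] {ω : R}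
    {k : ℕ} (hω : IsPrimitiveRoot ω k) (m : ℕ) :
    ∑ j ∈ range k, (ω ^ m) ^ j = if k ∣ m then (k : R) else 0 := by
  split_ifs with hkm
  · simp [(hω.pow_eq_one_iff_dvd m).2 hkm]
  · have hne : ω ^ m - 1 ≠ 0 := sub_ne_zero.2 fun h => hkm ((hω.pow_eq_one_iff_dvd m).1 h)
    refine (mul_eq_zero.1 ?_).resolve_right hne
    rw [geom_sum_mul, ← pow_mul, mul_comm, pow_mul, hω.pow_eq_one, one_pow, sub_self]

theorem IsPrimitiveRoot.hasSum_pow_smul_mul {E : Type*} [NormedAddCommGroup E] [NormedSpace ℂ E]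
    {T : ℕ → E} {S : ℕ → E} {ω ξ : ℂ} {k : ℕ} (hω : IsPrimitiveRoot ω k) (hk : k ≠ 0)
    (hS : ∀ j ∈ range k, HasSum (fun m => (ω ^ j * ξ) ^ m • T m) (S j)) :
    HasSum (fun m => (ξ ^ k) ^ m • T (m * k)) ((k : ℂ)⁻¹ • ∑ j ∈ range k, S j) := by
  have hsum := (hasSum_sum hS).const_smul (k : ℂ)⁻¹
  have hterm : ∀ m, (k : ℂ)⁻¹ • ∑ j ∈ range k, (ω ^ j * ξ) ^ m • T m
      = if k ∣ m then ξ ^ m • T m else 0 := fun m => by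
    simp_rw [mul_pow, ← pow_mul, mul_comm _ m, pow_mul, mul_smul, ← sum_smul,
      hω.sum_range_pow_pow_eq m]
    split_ifs <;> simp [hk]
  simp_rw [hterm] at hsum
  have hinj : Function.Injective (· * k) := mul_left_injective₀ hk
  refine ((hinj.hasSum_iff fun m hm => ?_).2 hsum).congr_fun fun m => ?_
  · rw [if_neg]
    rintro ⟨d, rfl⟩
    exact hm ⟨d, mul_comm d k⟩
  · simp [← pow_mul, mul_comm k m]

theorem norm_sub_smul_le_norm_sub_conj_smul {𝕜 E : Type*} [RCLike 𝕜] [NormedAddCommGroup E]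
    [InnerProductSpace 𝕜 E] {x y : E} (hxy : ‖x‖ ≤ ‖y‖) {a : 𝕜} (ha : ‖a‖ ≤ 1) :
    ‖x - a • y‖ ≤ ‖y - (starRingEnd 𝕜) a • x‖ := by
  have hcross :
      RCLike.re (inner 𝕜 x (a • y)) = RCLike.re (inner 𝕜 y ((starRingEnd 𝕜) a • x)) := by
    rw [inner_smul_right, inner_smul_right, ← inner_conj_symm x y, ← RCLike.conj_re (a * _),
      map_mul, RCLike.conj_conj]
  have hsq : ‖x - a • y‖ ^ 2 ≤ ‖y - (starRingEnd 𝕜) a • x‖ ^ 2 := by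
    rw [norm_sub_sq (𝕜 := 𝕜), norm_sub_sq (𝕜 := 𝕜), hcross, norm_smul, norm_smul,
      RCLike.norm_conj]
    have : ‖x‖ ^ 2 ≤ ‖y‖ ^ 2 := pow_le_pow_left₀ (norm_nonneg _) hxy 2
    nlinarith [mul_nonneg (sub_nonneg.2 (pow_le_one₀ (norm_nonneg a) ha : ‖a‖ ^ 2 ≤ 1))
      (sub_nonneg.2 this)]
  exact pow_le_pow_iff_left₀ (norm_nonneg _) (norm_nonneg _) two_ne_zero |>.1 hsq

theorem ContinuousLinearMap.norm_mul_ringInverse_le_one {𝕜 E : Type*}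
    [NontriviallyNormedField 𝕜] [NormedAddCommGroup E] [NormedSpace 𝕜 E] {A B : E →L[𝕜] E}
    (hB : IsUnit B) (hAB : ∀ y, ‖A y‖ ≤ ‖B y‖) : ‖A * Ring.inverse B‖ ≤ 1 := by
  refine ContinuousLinearMap.opNorm_le_bound _ zero_le_one fun x => ?_
  calc ‖A (Ring.inverse B x)‖ ≤ ‖B (Ring.inverse B x)‖ := hAB _
    _ = ‖(B * Ring.inverse B) x‖ := rfl
    _ = 1 * ‖x‖ := by rw [Ring.mul_inverse_cancel B hB, one_mul]; rfl

theorem norm_deriv_zero_le_one_sub_sq {H : Type*} [NormedAddCommGroup H] [InnerProductSpace ℂ H]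
    [CompleteSpace H] {v : ℂ → H →L[ℂ] H} (hd : DifferentiableOn ℂ v (ball 0 1))
    (hv : ∀ ζ ∈ ball (0 : ℂ) 1, ‖v ζ‖ ≤ 1) {a : ℂ} (ha : ‖a‖ < 1) (hv0 : v 0 = a • 1) :
    ‖deriv v 0‖ ≤ 1 - ‖a‖ ^ 2 := by
  set u : ℂ → H →L[ℂ] H := fun ζ => 1 - (starRingEnd ℂ) a • v ζ
  have hu : ∀ ζ ∈ ball (0 : ℂ) 1, IsUnit (u ζ) := fun ζ hζ => by
    refine isUnit_one_sub_of_norm_lt_one ?_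
    rw [norm_smul, RCLike.norm_conj]
    exact lt_of_le_of_lt (mul_le_of_le_one_right (norm_nonneg _) (hv ζ hζ)) ha
  -- the Möbius transform of `v` sending `a • 1` to `0`
  set M : ℂ → H →L[ℂ] H := fun ζ => (v ζ - a • 1) * Ring.inverse (u ζ)
  have hM : ∀ ζ ∈ ball (0 : ℂ) 1, ‖M ζ‖ ≤ 1 := fun ζ hζ =>
    ContinuousLinearMap.norm_mul_ringInverse_le_one (hu ζ hζ) fun y => by
      have := norm_sub_smul_le_norm_sub_conj_smul
        (((v ζ).le_opNorm y).trans (mul_le_of_le_one_left (norm_nonneg y) (hv ζ hζ))) ha.le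
      simpa only [u, sub_apply, smul_apply, one_apply_eq_self] using this
  have hMd : DifferentiableOn ℂ M (ball 0 1) := fun ζ hζ => by
    have hvζ := hd.differentiableAt (isOpen_ball.mem_nhds hζ)
    have huζ : DifferentiableAt ℂ u ζ := by fun_prop
    exact ((hvζ.sub_const (a • 1)).mul (huζ.inverse (hu ζ hζ))).differentiableWithinAt
  have h0 : (0 : ℂ) ∈ ball (0 : ℂ) 1 := mem_ball_self one_pos
  have hM0 : M 0 = 0 := by simp only [M, hv0, sub_self, zero_mul]
  have hMderiv : deriv M 0 = deriv v 0 * Ring.inverse (u 0) := by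
    have hvd := (hd.differentiableAt (isOpen_ball.mem_nhds h0)).hasDerivAt
    have hu0d : DifferentiableAt ℂ u 0 := by have := hvd.differentiableAt; fun_prop
    have : HasDerivAt M _ 0 := (hvd.sub_const (a • 1)).mul (hu0d.inverse (hu 0 h0)).hasDerivAt
    rw [this.deriv, hv0, sub_self, zero_mul, add_zero]
  have hM'_le : ‖deriv M 0‖ ≤ 1 := by
    have := Complex.norm_deriv_le_div_of_mapsTo_ball hMd
      (fun ζ hζ => by simpa [hM0] using hM ζ hζ) one_pos
    rwa [div_one] at this
  have hu0 : ‖u 0‖ ≤ 1 - ‖a‖ ^ 2 := by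
    have : u 0 = ((1 - ‖a‖ ^ 2 : ℝ) : ℂ) • (1 : H →L[ℂ] H) := by
      simp [u, hv0, smul_smul, RCLike.conj_mul, sub_smul]
    rw [this, norm_smul, Complex.norm_real, Real.norm_of_nonneg (by nlinarith [norm_nonneg a])]
    exact mul_le_of_le_one_right (by nlinarith [norm_nonneg a]) ContinuousLinearMap.norm_id_le
  calc ‖deriv v 0‖ = ‖deriv M 0 * u 0‖ := by
        rw [hMderiv, mul_assoc, Ring.inverse_mul_cancel _ (hu 0 h0), mul_one]
    _ ≤ 1 * (1 - ‖a‖ ^ 2) := (norm_mul_le _ _).trans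
        (mul_le_mul hM'_le hu0 (norm_nonneg _) zero_le_one)
    _ = 1 - ‖a‖ ^ 2 := one_mul _

theorem hasFPowerSeriesOnBall_tsum_pow_smul_s5 {E : Type*} [NormedAddCommGroup E] [NormedSpace ℂ E]
    [CompleteSpace E] {b : ℕ → E} {C : ℝ} (hb : ∀ m, ‖b m‖ ≤ C) :
    HasFPowerSeriesOnBall (fun ζ : ℂ => ∑' m, ζ ^ m • b m)
      (fun m => ContinuousMultilinearMap.mkPiRing ℂ (Fin m) (b m)) 0 1 := by
  set p : FormalMultilinearSeries ℂ ℂ E :=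
    fun m => ContinuousMultilinearMap.mkPiRing ℂ (Fin m) (b m)
  have hp : 1 ≤ p.radius := p.le_radius_of_bound C fun m => by
    simpa [p, ContinuousMultilinearMap.norm_mkPiRing] using hb m
  have := (p.hasFPowerSeriesOnBall (zero_lt_one.trans_le hp)).mono one_pos hp
  convert this using 2 with ζ
  simp [p, FormalMultilinearSeries.sum]

theorem norm_coeff_le_one_sub_sq {H : Type*} [NormedAddCommGroup H] [InnerProductSpace ℂ H]
    [CompleteSpace H] {T : ℕ → H →L[ℂ] H} {F : ℂ → H →L[ℂ] H} {a : ℂ} (ha : ‖a‖ < 1)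
    (hT0 : T 0 = a • 1) (hF : ∀ ξ : ℂ, ‖ξ‖ ≤ 1 → HasSum (fun m => ξ ^ m • T m) (F ξ))
    (hF_le : ∀ ξ : ℂ, ‖ξ‖ ≤ 1 → ‖F ξ‖ ≤ 1) {k : ℕ} (hk : k ≠ 0) : ‖T k‖ ≤ 1 - ‖a‖ ^ 2 := by
  obtain ⟨C, hC⟩ : BddAbove (Set.range fun m => ‖T m‖) := by
    simpa using (hF 1 (by simp)).summable.tendsto_atTop_zero.norm.bddAbove_range
  have hv := hasFPowerSeriesOnBall_tsum_pow_smul_s5 (b := fun m => T (m * k))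
    fun m => hC (Set.mem_range_self (m * k))
  set v : ℂ → H →L[ℂ] H := fun ζ => ∑' m, ζ ^ m • T (m * k)
  have hball : eball (0 : ℂ) 1 = ball 0 1 := by simpa using eball_coe (x := (0 : ℂ)) (ε := 1)
  have hvd : deriv v 0 = T k := by simpa using hv.hasFPowerSeriesAt.deriv
  have hv0 : v 0 = a • 1 := by
    simpa [hT0] using (hasSum_zero_pow_smul (𝕜 := ℂ) fun m => T (m * k)).tsum_eq
  -- `v (ξ ^ k)` is the mean of `F` over the `k` rotations of `ξ`
  have hv_le : ∀ ζ ∈ ball (0 : ℂ) 1, ‖v ζ‖ ≤ 1 := by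
    intro ζ hζ
    obtain ⟨ξ, rfl⟩ := IsAlgClosed.exists_pow_nat_eq ζ (Nat.pos_of_ne_zero hk)
    have hξ : ‖ξ‖ ≤ 1 := by
      rw [mem_ball_zero_iff, norm_pow] at hζ
      exact ((pow_lt_one_iff_of_nonneg (norm_nonneg ξ) hk).1 hζ).le
    have hω := Complex.isPrimitiveRoot_exp k hk
    have hrot : ∀ j, ‖Complex.exp (2 * Real.pi * Complex.I / k) ^ j * ξ‖ ≤ 1 := fun j => by
      rw [norm_mul, norm_pow, hω.norm'_eq_one hk, one_pow, one_mul]; exact hξ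
    have hvζ : HasSum (fun m => (ξ ^ k) ^ m • T (m * k)) (v (ξ ^ k)) := by
      simpa using hv.hasSum (y := ξ ^ k) (hball ▸ hζ)
    rw [hvζ.unique (hω.hasSum_pow_smul_mul hk fun j _ => hF _ (hrot j)), norm_smul, norm_inv,
      Complex.norm_natCast]
    refine inv_mul_le_one_of_le₀ ((norm_sum_le _ _).trans ?_) (Nat.cast_nonneg k)
    simpa using sum_le_card_nsmul (range k) _ 1 fun j _ => hF_le _ (hrot j)
  rw [← hvd]
  exact norm_deriv_zero_le_one_sub_sq (hball ▸ hv.differentiableOn) hv_le ha hv0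

section GeometricBounds

variable {b : ℕ → ℝ} {M ρ : ℝ}

theorem summable_and_tsum_le_of_le_geometric (hb0 : ∀ k, 0 ≤ b k) (hρ0 : 0 ≤ ρ) (hρ1 : ρ < 1)
    (hb : ∀ k, k ≠ 0 → b k ≤ M * ρ ^ k) :
    Summable b ∧ ∑' k, b k ≤ b 0 + M * ρ / (1 - ρ) := by
  have hg : HasSum (fun k => M * ρ * ρ ^ k) (M * ρ / (1 - ρ)) := by
    simpa [div_eq_mul_inv] using (hasSum_geometric_of_lt_one hρ0 hρ1).mul_left (M * ρ)
  have hle : ∀ k, b (k + 1) ≤ M * ρ * ρ ^ k := fun k => by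
    simpa [pow_succ', mul_assoc] using hb (k + 1) k.succ_ne_zero
  have hs : Summable fun k => b (k + 1) :=
    hg.summable.of_nonneg_of_le (fun k => hb0 _) hle
  have hsb : Summable b := (summable_nat_add_iff 1).1 hs
  refine ⟨hsb, ?_⟩
  rw [hsb.tsum_eq_zero_add, ← hg.tsum_eq]
  exact add_le_add_right (hs.tsum_le_tsum hle hg.summable) _

theorem summable_and_tsum_mul_sq_le_of_le_geometric (hb0 : ∀ k, 0 ≤ b k) (hρ0 : 0 ≤ ρ)
    (hρ1 : ρ < 1) (hb : ∀ k, k ≠ 0 → b k ≤ M * ρ ^ k) :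
    Summable (fun k : ℕ => (k : ℝ) * b k ^ 2) ∧
      ∑' k : ℕ, (k : ℝ) * b k ^ 2 ≤ M ^ 2 * (ρ ^ 2 / (1 - ρ ^ 2) ^ 2) := by
  have hρ2 : ‖ρ ^ 2‖ < 1 := by
    rw [Real.norm_of_nonneg (by positivity)]; nlinarith
  have hg := (hasSum_coe_mul_geometric_of_norm_lt_one hρ2).mul_left (M ^ 2)
  have hle : ∀ k : ℕ, (k : ℝ) * b k ^ 2 ≤ M ^ 2 * ((k : ℝ) * (ρ ^ 2) ^ k) := fun k => by
    rcases eq_or_ne k 0 with rfl | hk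
    · simp
    · have := pow_le_pow_left₀ (hb0 k) (hb k hk) 2
      rw [← pow_mul, mul_comm 2 k, pow_mul] at *
      nlinarith [(k.cast_nonneg : (0 : ℝ) ≤ k)]
  have hs : Summable fun k : ℕ => (k : ℝ) * b k ^ 2 :=
    hg.summable.of_nonneg_of_le (fun k => by positivity) hle
  exact ⟨hs, hg.tsum_eq ▸ hs.tsum_le_tsum hle hg.summable⟩

end GeometricBounds

theorem one_sub_sq_pow_le {a : ℝ} (ha0 : 0 ≤ a) (ha1 : a ≤ 1) {m : ℕ} (hm : 1 ≤ m) :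
    (1 - a ^ 2) ^ (2 * m) ≤ 4 * (2 * m - 1) * (1 - a) ^ 2 := by
  have h1 : 0 ≤ 1 - a ^ 2 := by nlinarith
  have hm' : (1 : ℝ) ≤ m := by exact_mod_cast hm
  calc (1 - a ^ 2) ^ (2 * m) ≤ (1 - a ^ 2) ^ 2 :=
        pow_le_pow_of_le_one h1 (by nlinarith) (by omega)
    _ = (1 + a) ^ 2 * (1 - a) ^ 2 := by ring
    _ ≤ 4 * (2 * m - 1) * (1 - a) ^ 2 := by
        gcongr
        nlinarith

theorem sum_mul_pow_le_of_weighted_sum_le {a S : ℝ} (ha0 : 0 ≤ a) (ha1 : a ≤ 1) (hS0 : 0 ≤ S)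
    (hS : S ≤ (1 - a ^ 2) ^ 2 * (3 / 8) ^ 2) {l : ℕ} {c : ℕ → ℝ}
    (hc : ∀ m ∈ Icc 1 l, 0 ≤ c m)
    (hcsum : ∑ m ∈ Icc 1 l, 8 * (2 * (m : ℝ) - 1) * c m * (3 / 8 : ℝ) ^ (2 * m) ≤ 1) :
    ∑ m ∈ Icc 1 l, c m * S ^ m ≤ (1 - a) ^ 2 / 2 := by
  calc ∑ m ∈ Icc 1 l, c m * S ^ m
      ≤ ∑ m ∈ Icc 1 l,
          8 * (2 * (m : ℝ) - 1) * c m * (3 / 8 : ℝ) ^ (2 * m) * ((1 - a) ^ 2 / 2) := by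
        refine sum_le_sum fun m hm => ?_
        have hSm : S ^ m ≤ (1 - a ^ 2) ^ (2 * m) * (3 / 8 : ℝ) ^ (2 * m) := by
          rw [pow_mul, pow_mul, ← mul_pow]
          exact pow_le_pow_left₀ hS0 hS m
        have := one_sub_sq_pow_le ha0 ha1 (mem_Icc.1 hm).1
        calc c m * S ^ m ≤ c m * ((1 - a ^ 2) ^ (2 * m) * (3 / 8 : ℝ) ^ (2 * m)) := by
              gcongr; exact hc m hm
          _ ≤ c m * (4 * (2 * m - 1) * (1 - a) ^ 2 * (3 / 8 : ℝ) ^ (2 * m)) := by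
              gcongr; exact hc m hm
          _ = _ := by ring
    _ = (∑ m ∈ Icc 1 l, 8 * (2 * (m : ℝ) - 1) * c m * (3 / 8 : ℝ) ^ (2 * m)) *
          ((1 - a) ^ 2 / 2) := (sum_mul _ _ _).symm
    _ ≤ (1 - a) ^ 2 / 2 := mul_le_of_le_one_left (by positivity) hcsum

theorem bohr_multidim_improved_polynomial_general
    {H : Type*} [NormedAddCommGroup H] [InnerProductSpace ℂ H] [CompleteSpace H]
    {n : ℕ} (Q : Set (Fin n → ℂ))
    (hQcirc : ∀ z ∈ Q, ∀ ξ : ℂ, ‖ξ‖ ≤ 1 → ξ • z ∈ Q)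
    (f : (Fin n → ℂ) → (H →L[ℂ] H))
    (P : ℕ → (Fin n → ℂ) → (H →L[ℂ] H))
    (A : (Fin n → ℕ) → (H →L[ℂ] H))
    (hP : ∀ (k : ℕ) (z : Fin n → ℂ),
      HasSum (fun α : {α : Fin n → ℕ // ∑ i, α i = k} =>
        (∏ i, z i ^ α.1 i) • A α.1) (P k z))
    (hexp : ∀ z ∈ Q, HasSum (fun k => P k z) (f z))
    (hlt : ∀ z ∈ Q, ‖f z‖ < 1)
    (a₀ : ℂ) (ha₀ : ‖a₀‖ < 1)
    (hf0 : f 0 = a₀ • (1 : H →L[ℂ] H))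
    (l : ℕ) (c : ℕ → ℝ) (hc : ∀ m ∈ Finset.Icc 1 l, 0 ≤ c m)
    (hcsum : ∑ m ∈ Finset.Icc 1 l,
      8 * (2 * (m : ℝ) - 1) * c m * (3 / 8 : ℝ) ^ (2 * m) ≤ 1)
    (w : Fin n → ℂ) (hw : w ∈ Q)
    (r : ℝ) (hr0 : 0 ≤ r) (hr : r ≤ 1 / 3) :
    Summable (fun k => ‖P k ((r : ℂ) • w)‖) ∧
    Summable (fun k : ℕ => (k : ℝ) * ‖P k ((r : ℂ) • w)‖ ^ 2) ∧
    ∑' k, ‖P k ((r : ℂ) • w)‖ +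
        ∑ m ∈ Finset.Icc 1 l,
          c m * (∑' k : ℕ, (k : ℝ) * ‖P k ((r : ℂ) • w)‖ ^ 2) ^ m ≤ 1 := by
  have homog : ∀ k (ξ : ℂ) z, P k (ξ • z) = ξ ^ k • P k z := fun k =>
    apply_smul_eq_pow_smul_of_hasSum_monomials_s5 (hP k)
  have hF : ∀ ξ : ℂ, ‖ξ‖ ≤ 1 → HasSum (fun k => ξ ^ k • P k w) (f (ξ • w)) := fun ξ hξ => by
    simpa only [homog] using hexp _ (hQcirc w hw ξ hξ)
  have hP0 : P 0 w = a₀ • 1 := by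
    simpa [hf0] using (hasSum_zero_pow_smul (fun k => P k w)).unique (hF 0 (by simp))
  have hcoeff : ∀ k, k ≠ 0 → ‖P k w‖ ≤ 1 - ‖a₀‖ ^ 2 := fun k hk =>
    norm_coeff_le_one_sub_sq ha₀ hP0 hF (fun ξ hξ => (hlt _ (hQcirc w hw ξ hξ)).le) hk
  have hb : ∀ k, k ≠ 0 → ‖P k ((r : ℂ) • w)‖ ≤ (1 - ‖a₀‖ ^ 2) * (1 / 3) ^ k := fun k hk => by
    rw [homog, norm_smul, norm_pow, Complex.norm_real, Real.norm_of_nonneg hr0, mul_comm]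
    exact mul_le_mul (hcoeff k hk) (pow_le_pow_left₀ hr0 hr k) (by positivity)
      ((norm_nonneg _).trans (hcoeff k hk))
  obtain ⟨hsum, htsum⟩ := summable_and_tsum_le_of_le_geometric (fun k => norm_nonneg _)
    (by norm_num) (by norm_num) hb
  obtain ⟨hsum_sq, htsum_sq⟩ := summable_and_tsum_mul_sq_le_of_le_geometric
    (fun k => norm_nonneg _) (by norm_num) (by norm_num) hb
  have hb0 : ‖P 0 ((r : ℂ) • w)‖ ≤ ‖a₀‖ := by
    rw [homog, pow_zero, one_smul, hP0, norm_smul]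
    exact mul_le_of_le_one_right (norm_nonneg _) ContinuousLinearMap.norm_id_le
  have hG := sum_mul_pow_le_of_weighted_sum_le (norm_nonneg a₀) ha₀.le
    (tsum_nonneg fun k => by positivity) (htsum_sq.trans_eq (by norm_num)) hc hcsum
  refine ⟨hsum, hsum_sq, ?_⟩
  linarith [show ‖a₀‖ + (1 - ‖a₀‖ ^ 2) * (1 / 3) / (1 - 1 / 3) + (1 - ‖a₀‖) ^ 2 / 2 = 1 by ring]

/-- Multidimensional improved operator valued Bohr inequality with a polynomial `G`:
on a complete circular domain `Q`, if `f = ∑ₖ Pₖ` with `‖f‖ < 1`, `f(0) = a₀ I`,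
`|a₀| < 1`, and `∑ₖ k‖Pₖ(z)‖²` converges on `Q`, and `G(x) = ∑_{m=1}^l c_m x^m` has
nonnegative coefficients with `∑_{m=1}^l 8(2m-1) c_m (3/8)^{2m} ≤ 1`, then for
`r ∈ [0,1/3]` and `w ∈ Q`, the point `z = r·w` satisfies
`∑ₖ ‖Pₖ(z)‖ + G(∑ₖ k‖Pₖ(z)‖²) ≤ 1`. -/
theorem bohr_multidim_improved_polynomial
    {H : Type*} [NormedAddCommGroup H] [InnerProductSpace ℂ H] [CompleteSpace H]
    {n : ℕ} (Q : Set (Fin n → ℂ))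
    (hQopen : IsOpen Q) (hQconn : IsConnected Q) (hQ0 : (0 : Fin n → ℂ) ∈ Q)
    (hQcirc : ∀ z ∈ Q, ∀ ξ : ℂ, ‖ξ‖ ≤ 1 → ξ • z ∈ Q)
    (f : (Fin n → ℂ) → (H →L[ℂ] H))
    (P : ℕ → (Fin n → ℂ) → (H →L[ℂ] H))
    (A : (Fin n → ℕ) → (H →L[ℂ] H))
    (hP : ∀ (k : ℕ) (z : Fin n → ℂ),
      HasSum (fun α : {α : Fin n → ℕ // ∑ i, α i = k} =>
        (∏ i, z i ^ α.1 i) • A α.1) (P k z))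
    (hexp : ∀ z ∈ Q, HasSum (fun k => P k z) (f z))
    (hlt : ∀ z ∈ Q, ‖f z‖ < 1)
    (a₀ : ℂ) (ha₀ : ‖a₀‖ < 1)
    (hf0 : f 0 = a₀ • (1 : H →L[ℂ] H))
    (hS : ∀ z ∈ Q, Summable (fun k : ℕ => (k : ℝ) * ‖P k z‖ ^ 2))
    (l : ℕ) (hl : 1 ≤ l) (c : ℕ → ℝ) (hc : ∀ m ∈ Finset.Icc 1 l, 0 ≤ c m)
    (hcsum : ∑ m ∈ Finset.Icc 1 l,
      8 * (2 * (m : ℝ) - 1) * c m * (3 / 8 : ℝ) ^ (2 * m) ≤ 1)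
    (w : Fin n → ℂ) (hw : w ∈ Q)
    (r : ℝ) (hr0 : 0 ≤ r) (hr : r ≤ 1 / 3) :
    Summable (fun k => ‖P k ((r : ℂ) • w)‖) ∧
    Summable (fun k : ℕ => (k : ℝ) * ‖P k ((r : ℂ) • w)‖ ^ 2) ∧
    ∑' k, ‖P k ((r : ℂ) • w)‖ +
        ∑ m ∈ Finset.Icc 1 l,
          c m * (∑' k : ℕ, (k : ℝ) * ‖P k ((r : ℂ) • w)‖ ^ 2) ^ m ≤ 1 :=
  bohr_multidim_improved_polynomial_general Q hQcirc f P A hP hexp hlt a₀ ha₀ hf0 l c hc hcsum w hw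
    r hr0 hr
end

section
/- For every complex Hilbert space H and every r with 1/√2 < r < 1, there exists an analytic function f : 𝔻 → 𝓑(H) with power series expansion f(z) = ∑_{k=1}^∞ A_k z^k (A_k ∈ 𝓑(H)) satisfying ‖f(z)‖ ≤ 1 for all z ∈ 𝔻 and f(0) = 0, such that ∑_{k=1}^∞ ‖A_k‖ r^k > 1. In fact, the function h(ξ) = ξ · ((1/√2 − ξ)/(1 − ξ/√2)) · I has this property; i.e., the radius 1/√2 in the Bohr inequality for operator valued functions vanishing at the origin is best possible. -/
/-!
With `a = 1/√2`, the function is `z` times the disc automorphism `(a - z)/(1 - a z)`, hence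
bounded by `1`, because `|1 - a z|² - |a - z|² = (1 - a²)(1 - |z|²)`. Its Taylor coefficients
are `a` and then `-(1 - a²) aᵏ`, so, as `1 - a² = a²`, the majorant series at `r` sums to
`t + t²/(1 - t)` with `t = a r`, which exceeds `1` exactly when `t > 1/2`, i.e. `r > 1/√2`.
-/

lemma hasSum_of_geometric_tail {K : Type*} [NormedField K] [CompleteSpace K]
    {f : ℕ → K} {c q : K} (hq : ‖q‖ < 1) (htail : ∀ k, f (k + 2) = c * q ^ k) :
    HasSum f (f 0 + f 1 + c * (1 - q)⁻¹) := by
  rw [← hasSum_nat_add_iff' 2, Finset.sum_range_succ, Finset.sum_range_one, add_sub_cancel_left]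
  simpa only [htail] using (hasSum_geometric_of_norm_lt_one hq).mul_left c

lemma normSq_one_sub_mul_sub_normSq_sub (a : ℝ) (z : ℂ) :
    Complex.normSq (1 - z * a) - Complex.normSq (a - z) =
      (1 - a ^ 2) * (1 - Complex.normSq z) := by
  simp only [Complex.normSq_apply, Complex.sub_re, Complex.sub_im, Complex.mul_re,
    Complex.mul_im, Complex.ofReal_re, Complex.ofReal_im, Complex.one_re, Complex.one_im]
  ring

lemma norm_sub_le_norm_one_sub_mul {a : ℝ} (ha : |a| ≤ 1) {z : ℂ} (hz : ‖z‖ ≤ 1) :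
    ‖(a : ℂ) - z‖ ≤ ‖1 - z * a‖ := by
  have h := normSq_one_sub_mul_sub_normSq_sub a z
  rw [← Complex.sq_norm, ← Complex.sq_norm, ← Complex.sq_norm] at h
  have ha2 : 0 ≤ 1 - a ^ 2 := by nlinarith [abs_nonneg a, sq_abs a]
  have hz2 : 0 ≤ 1 - ‖z‖ ^ 2 := by nlinarith [norm_nonneg z]
  exact (sq_le_sq₀ (norm_nonneg _) (norm_nonneg _)).1 (by nlinarith [mul_nonneg ha2 hz2])

lemma norm_mul_sub_div_one_sub_mul_le_one {a : ℝ} (ha : |a| ≤ 1) {z : ℂ} (hz : ‖z‖ ≤ 1) :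
    ‖z * (a - z) / (1 - z * a)‖ ≤ 1 := by
  rw [norm_div, norm_mul]
  refine div_le_one_of_le₀ ?_ (norm_nonneg _)
  calc ‖z‖ * ‖(a : ℂ) - z‖ ≤ 1 * ‖(a : ℂ) - z‖ := by gcongr
    _ ≤ ‖1 - z * a‖ := by rw [one_mul]; exact norm_sub_le_norm_one_sub_mul ha hz

/-- Taylor coefficients of `z (a - z) / (1 - a z) = a z - (1 - a²) ∑ₖ aᵏ zᵏ⁺²`. -/
def mulBlaschkeCoeff (a : ℝ) : ℕ → ℝ
  | 0 => 0
  | 1 => a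
  | k + 2 => -(1 - a ^ 2) * a ^ k

lemma hasSum_mulBlaschkeCoeff {a : ℝ} {z : ℂ} (hza : ‖z * a‖ < 1) :
    HasSum (fun k => z ^ k * mulBlaschkeCoeff a k) (z * (a - z) / (1 - z * a)) := by
  have hden : 1 - z * a ≠ 0 := by
    intro h
    rw [← sub_eq_zero.1 h, norm_one] at hza
    exact lt_irrefl _ hza
  convert hasSum_of_geometric_tail (f := fun k => z ^ k * (mulBlaschkeCoeff a k : ℂ))
    (c := -(1 - a ^ 2) * z ^ 2) hza
    (fun k => by simp only [mulBlaschkeCoeff]; push_cast; ring) using 1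
  · rfl
  simp only [mulBlaschkeCoeff, Complex.ofReal_zero]
  field_simp
  ring

lemma hasSum_abs_mulBlaschkeCoeff_mul_pow {a r : ℝ} (ha : |a| ≤ 1) (hr : 0 ≤ r)
    (har : |a| * r < 1) :
    HasSum (fun k => |mulBlaschkeCoeff a k| * r ^ k)
      (|a| * r + (1 - a ^ 2) * r ^ 2 * (1 - |a| * r)⁻¹) := by
  have ha2 : 0 ≤ 1 - a ^ 2 := by nlinarith [abs_nonneg a, sq_abs a]
  have hq : ‖|a| * r‖ < 1 := by
    rwa [Real.norm_of_nonneg (mul_nonneg (abs_nonneg a) hr)]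
  convert hasSum_of_geometric_tail (f := fun k => |mulBlaschkeCoeff a k| * r ^ k)
    (c := (1 - a ^ 2) * r ^ 2) hq
    (fun k => by
      simp only [mulBlaschkeCoeff, abs_mul, abs_neg, abs_pow, abs_of_nonneg ha2]
      ring)
    using 1
  · rfl
  simp [mulBlaschkeCoeff]

lemma one_lt_add_sq_mul_inv_one_sub {t : ℝ} (ht : 1 / 2 < t) (ht1 : t < 1) :
    1 < t + t ^ 2 * (1 - t)⁻¹ := by
  have h : 0 < 1 - t := sub_pos.2 ht1
  rw [← mul_lt_mul_iff_of_pos_right h, add_mul, mul_assoc, inv_mul_cancel₀ h.ne']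
  nlinarith

theorem bohr_vanishing_at_zero_sharpness_general
    {H : Type*} [NormedAddCommGroup H] [InnerProductSpace ℂ H]
    [Nontrivial H]
    (r : ℝ) (hr1 : (Real.sqrt 2)⁻¹ < r) (hr2 : r < 1) :
    ∃ (f : ℂ → (H →L[ℂ] H)) (A : ℕ → (H →L[ℂ] H)),
      (∀ z ∈ Metric.ball (0 : ℂ) 1, HasSum (fun k => z ^ k • A k) (f z)) ∧
      (∀ z ∈ Metric.ball (0 : ℂ) 1, ‖f z‖ ≤ 1) ∧
      f 0 = 0 ∧ A 0 = 0 ∧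
      (∀ ξ ∈ Metric.ball (0 : ℂ) 1,
        f ξ = (ξ * (((Real.sqrt 2 : ℂ))⁻¹ - ξ) / (1 - ξ * ((Real.sqrt 2 : ℂ))⁻¹)) •
          (1 : H →L[ℂ] H)) ∧
      Summable (fun k => ‖A k‖ * r ^ k) ∧
      1 < ∑' k, ‖A k‖ * r ^ k := by
  set a : ℝ := (Real.sqrt 2)⁻¹
  have ha_pos : 0 < a := by positivity
  have ha_sq : a ^ 2 = 1 / 2 := by rw [inv_pow, Real.sq_sqrt zero_le_two, one_div]
  have ha_le_one : |a| ≤ 1 := by rw [abs_of_pos ha_pos]; nlinarith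
  have hcast : ((Real.sqrt 2 : ℂ))⁻¹ = a := by push_cast [a]; rfl
  have hnorm (k : ℕ) :
      ‖(mulBlaschkeCoeff a k : ℂ) • (1 : H →L[ℂ] H)‖ = |mulBlaschkeCoeff a k| := by
    rw [norm_smul, norm_one, mul_one, Complex.norm_real, Real.norm_eq_abs]
  have hmajorant := hasSum_abs_mulBlaschkeCoeff_mul_pow ha_le_one (ha_pos.trans hr1).le
    (by rw [abs_of_pos ha_pos]; nlinarith)
  simp_rw [← hnorm] at hmajorant
  simp only [hcast]
  refine ⟨fun ξ => (ξ * (a - ξ) / (1 - ξ * a)) • 1, fun k => (mulBlaschkeCoeff a k : ℂ) • 1,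
    fun z hz => ?_, fun z hz => ?_, by simp, by simp [mulBlaschkeCoeff], fun _ _ => rfl,
    hmajorant.summable, ?_⟩
  · have hza : ‖z * a‖ < 1 := by
      rw [norm_mul, Complex.norm_real, Real.norm_eq_abs]
      exact mul_lt_one_of_nonneg_of_lt_one_left (norm_nonneg z) (mem_ball_zero_iff.1 hz) ha_le_one
    simpa only [smul_smul] using (hasSum_mulBlaschkeCoeff hza).smul_const (1 : H →L[ℂ] H)
  · rw [norm_smul, norm_one, mul_one]
    exact norm_mul_sub_div_one_sub_mul_le_one ha_le_one (mem_ball_zero_iff.1 hz).le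
  · have h_one_sub : 1 - a ^ 2 = a ^ 2 := by rw [ha_sq]; norm_num
    rw [hmajorant.tsum_eq, abs_of_pos ha_pos, h_one_sub, ← mul_pow]
    exact one_lt_add_sq_mul_inv_one_sub (by nlinarith) (by nlinarith)

/-- Sharpness of the radius `1/√2` in the operator valued Bohr inequality for functions
vanishing at the origin: for every `r ∈ (1/√2, 1)` the function
`h(ξ) = ξ ((1/√2 - ξ)/(1 - ξ/√2)) I` is analytic, bounded by `1`, vanishes at `0`,
and its majorant series at `r` exceeds `1`. -/
theorem bohr_vanishing_at_zero_sharpness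
    {H : Type*} [NormedAddCommGroup H] [InnerProductSpace ℂ H] [CompleteSpace H]
    [Nontrivial H]
    (r : ℝ) (hr1 : (Real.sqrt 2)⁻¹ < r) (hr2 : r < 1) :
    ∃ (f : ℂ → (H →L[ℂ] H)) (A : ℕ → (H →L[ℂ] H)),
      (∀ z ∈ Metric.ball (0 : ℂ) 1, HasSum (fun k => z ^ k • A k) (f z)) ∧
      (∀ z ∈ Metric.ball (0 : ℂ) 1, ‖f z‖ ≤ 1) ∧
      f 0 = 0 ∧ A 0 = 0 ∧
      (∀ ξ ∈ Metric.ball (0 : ℂ) 1,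
        f ξ = (ξ * (((Real.sqrt 2 : ℂ))⁻¹ - ξ) / (1 - ξ * ((Real.sqrt 2 : ℂ))⁻¹)) •
          (1 : H →L[ℂ] H)) ∧
      Summable (fun k => ‖A k‖ * r ^ k) ∧
      1 < ∑' k, ‖A k‖ * r ^ k :=
  bohr_vanishing_at_zero_sharpness_general r hr1 hr2
end

section
/- Let H be a complex Hilbert space and f : 𝔻 → 𝓑(H) an analytic function satisfying ‖f(z)‖ ≤ 1 for all z ∈ 𝔻. Then for every z ∈ 𝔻, ‖f(z)‖ ≤ (‖f(0)‖ + |z|)/(1 + ‖f(0)‖·|z|). -/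
/-!
Pairing `f z` with a norming functional reduces the estimate to a holomorphic
`g : 𝔻 → closedBall 0 1` with `‖g 0‖ ≤ ‖f 0‖`, since the bound `(s + t) / (1 + s t)` is
increasing in `s`. For `a = g 0` inside the disc, the Blaschke factor `φ_a(w) = (w - a) / (1 - ā w)`
makes `φ_a ∘ g` vanish at `0`, so Schwarz's lemma gives `|φ_a (g z)| ≤ |z|`; then
`g z = (u + a) / (1 + ā u)` with `u = φ_a (g z)`, and
`|(u + a) / (1 + ā u)| ≤ (|a| + |u|) / (1 + |a| |u|)`.
If `|g 0| = 1` the bound is `1`.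
-/

open Metric Set Complex ComplexConjugate

noncomputable section

def schwarzPickBound (s t : ℝ) : ℝ := (s + t) / (1 + s * t)

theorem schwarzPickBound_comm (s t : ℝ) : schwarzPickBound s t = schwarzPickBound t s := by
  simp only [schwarzPickBound, add_comm s, mul_comm s]

theorem schwarzPickBound_one_left {t : ℝ} (ht : 0 ≤ t) : schwarzPickBound 1 t = 1 := by
  rw [schwarzPickBound, one_mul, add_comm]
  exact div_self (by positivity)

/-- Cross-multiplying turns the claim into `0 ≤ (s₂ - s₁) * (1 - t ^ 2)`. -/
theorem schwarzPickBound_mono_left {s₁ s₂ t : ℝ} (hs₁ : 0 ≤ s₁) (hs : s₁ ≤ s₂) (ht₀ : 0 ≤ t)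
    (ht₁ : t ≤ 1) : schwarzPickBound s₁ t ≤ schwarzPickBound s₂ t := by
  have hs₂ : 0 ≤ s₂ := hs₁.trans hs
  rw [schwarzPickBound, schwarzPickBound, div_le_div_iff₀ (by positivity) (by positivity)]
  nlinarith [mul_nonneg (sub_nonneg.2 hs) (mul_nonneg (sub_nonneg.2 ht₁) (by linarith : 0 ≤ 1 + t))]

theorem schwarzPickBound_mono_right {s t₁ t₂ : ℝ} (hs₀ : 0 ≤ s) (hs₁ : s ≤ 1) (ht₁ : 0 ≤ t₁)
    (ht : t₁ ≤ t₂) : schwarzPickBound s t₁ ≤ schwarzPickBound s t₂ := by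
  rw [schwarzPickBound_comm s, schwarzPickBound_comm s]
  exact schwarzPickBound_mono_left ht₁ ht hs₀ hs₁

def blaschkeFactor (a w : ℂ) : ℂ := (w - a) / (1 - conj a * w)

theorem blaschkeFactor_self (a : ℂ) : blaschkeFactor a a = 0 := by
  simp [blaschkeFactor]

theorem one_sub_conj_mul_ne_zero {a w : ℂ} (ha : ‖a‖ < 1) (hw : ‖w‖ ≤ 1) :
    1 - conj a * w ≠ 0 := by
  intro h
  have : ‖conj a * w‖ < 1 := by
    rw [norm_mul, norm_conj]
    nlinarith [norm_nonneg a, norm_nonneg w]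
  rw [← sub_eq_zero.1 h, norm_one] at this
  exact lt_irrefl _ this

theorem sq_norm_one_sub_conj_mul_sub_sq_norm_sub (a w : ℂ) :
    ‖1 - conj a * w‖ ^ 2 - ‖w - a‖ ^ 2 = (1 - ‖a‖ ^ 2) * (1 - ‖w‖ ^ 2) := by
  simp only [Complex.sq_norm, normSq_apply, sub_re, sub_im, mul_re, mul_im, conj_re, conj_im,
    one_re, one_im]
  ring

theorem norm_blaschkeFactor_le_one {a w : ℂ} (ha : ‖a‖ < 1) (hw : ‖w‖ ≤ 1) :
    ‖blaschkeFactor a w‖ ≤ 1 := by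
  have hD := norm_pos_iff.2 (one_sub_conj_mul_ne_zero ha hw)
  rw [blaschkeFactor, norm_div, div_le_one hD]
  have := sq_norm_one_sub_conj_mul_sub_sq_norm_sub a w
  have : 0 ≤ (1 - ‖a‖ ^ 2) * (1 - ‖w‖ ^ 2) := by
    apply mul_nonneg <;> nlinarith [norm_nonneg a, norm_nonneg w]
  exact pow_le_pow_iff_left₀ (norm_nonneg _) hD.le two_ne_zero |>.1 (by linarith)

theorem blaschkeFactor_neg (a u : ℂ) :
    blaschkeFactor (-a) u = (u + a) / (1 + conj a * u) := by
  simp only [blaschkeFactor, sub_neg_eq_add, map_neg, neg_mul]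

theorem blaschkeFactor_neg_blaschkeFactor {a w : ℂ} (ha : ‖a‖ < 1) (hw : 1 - conj a * w ≠ 0) :
    blaschkeFactor (-a) (blaschkeFactor a w) = w := by
  rw [blaschkeFactor_neg, blaschkeFactor, div_add' _ _ _ hw, mul_div_assoc', one_add_div hw,
    div_div_div_cancel_right₀ hw, div_eq_iff]
  · ring
  · convert one_sub_conj_mul_ne_zero ha ha.le using 1
    ring

theorem norm_blaschkeFactor_neg_le {a u : ℂ} (ha : ‖a‖ ≤ 1) (hu : ‖u‖ ≤ 1) :
    ‖blaschkeFactor (-a) u‖ ≤ schwarzPickBound ‖a‖ ‖u‖ := by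
  rw [blaschkeFactor_neg, norm_div, schwarzPickBound]
  rcases eq_or_ne (1 + conj a * u) 0 with hD | hD
  · rw [hD, norm_zero, div_zero]
    positivity
  rw [div_le_div_iff₀ (norm_pos_iff.2 hD) (by positivity)]
  have hre : (conj a * u).re ≤ ‖a‖ * ‖u‖ := by
    simpa only [norm_mul, norm_conj] using re_le_norm (conj a * u)
  have hsq : ((‖a‖ + ‖u‖) * ‖1 + conj a * u‖) ^ 2 - (‖u + a‖ * (1 + ‖a‖ * ‖u‖)) ^ 2
      = 2 * (‖a‖ * ‖u‖ - (conj a * u).re) * (1 - ‖a‖ ^ 2) * (1 - ‖u‖ ^ 2) := by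
    have hnum : ‖u + a‖ ^ 2 = ‖a‖ ^ 2 + ‖u‖ ^ 2 + 2 * (conj a * u).re := by
      simp only [Complex.sq_norm, normSq_apply, add_re, add_im, mul_re, conj_re, conj_im]
      ring
    have hden : ‖1 + conj a * u‖ ^ 2 = 1 + ‖a‖ ^ 2 * ‖u‖ ^ 2 + 2 * (conj a * u).re := by
      simp only [Complex.sq_norm, normSq_apply, add_re, add_im, mul_re, mul_im, conj_re, conj_im,
        one_re, one_im]
      ring
    rw [mul_pow, mul_pow, hnum, hden]
    ring
  have : 0 ≤ 2 * (‖a‖ * ‖u‖ - (conj a * u).re) * (1 - ‖a‖ ^ 2) * (1 - ‖u‖ ^ 2) := by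
    have : 0 ≤ 1 - ‖a‖ ^ 2 := by nlinarith [norm_nonneg a]
    have : 0 ≤ 1 - ‖u‖ ^ 2 := by nlinarith [norm_nonneg u]
    have : 0 ≤ ‖a‖ * ‖u‖ - (conj a * u).re := by linarith
    positivity
  exact pow_le_pow_iff_left₀ (by positivity) (by positivity) two_ne_zero |>.1 (by linarith)

theorem Complex.norm_le_schwarzPickBound_of_mapsTo_ball {g : ℂ → ℂ}
    (hg : DifferentiableOn ℂ g (ball 0 1)) (hmaps : MapsTo g (ball 0 1) (closedBall 0 1))
    {z : ℂ} (hz : ‖z‖ < 1) : ‖g z‖ ≤ schwarzPickBound ‖g 0‖ ‖z‖ := by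
  have hg_le : ∀ w ∈ ball (0 : ℂ) 1, ‖g w‖ ≤ 1 := fun w hw => mem_closedBall_zero_iff.1 (hmaps hw)
  have hz_mem : z ∈ ball (0 : ℂ) 1 := mem_ball_zero_iff.2 hz
  have hg0 : ‖g 0‖ ≤ 1 := hg_le 0 (mem_ball_self one_pos)
  rcases hg0.eq_or_lt with ha_one | ha
  · rw [ha_one, schwarzPickBound_one_left (norm_nonneg z)]
    exact hg_le z hz_mem
  set a := g 0
  have hD : ∀ w ∈ ball (0 : ℂ) 1, 1 - conj a * g w ≠ 0 := fun w hw =>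
    one_sub_conj_mul_ne_zero ha (hg_le w hw)
  have hu : ‖blaschkeFactor a (g z)‖ ≤ ‖z‖ := by
    refine Complex.norm_le_norm_of_mapsTo_ball (f := fun w => blaschkeFactor a (g w)) ?_ ?_
      (blaschkeFactor_self a) hz
    · exact (hg.sub_const a).div ((differentiableOn_const 1).sub (hg.const_mul _)) hD
    · exact fun w hw => mem_closedBall_zero_iff.2 (norm_blaschkeFactor_le_one ha (hg_le w hw))
  calc ‖g z‖ = ‖blaschkeFactor (-a) (blaschkeFactor a (g z))‖ := by
        rw [blaschkeFactor_neg_blaschkeFactor ha (hD z hz_mem)]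
    _ ≤ schwarzPickBound ‖a‖ ‖blaschkeFactor a (g z)‖ :=
        norm_blaschkeFactor_neg_le ha.le (hu.trans hz.le)
    _ ≤ schwarzPickBound ‖a‖ ‖z‖ := schwarzPickBound_mono_right (norm_nonneg a) ha.le
        (norm_nonneg _) hu

theorem norm_le_schwarzPickBound_of_mapsTo_ball {E : Type*} [NormedAddCommGroup E]
    [NormedSpace ℂ E] {F : ℂ → E} (hF : DifferentiableOn ℂ F (ball 0 1))
    (hmaps : MapsTo F (ball 0 1) (closedBall 0 1)) {z : ℂ} (hz : ‖z‖ < 1) :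
    ‖F z‖ ≤ schwarzPickBound ‖F 0‖ ‖z‖ := by
  obtain ⟨φ, hφ, hφz⟩ := exists_dual_vector'' ℂ (F z)
  have hφ_le : ∀ x, ‖φ x‖ ≤ ‖x‖ := fun x => by
    simpa only [one_mul] using φ.le_of_opNorm_le hφ x
  have hg : MapsTo (φ ∘ F) (ball 0 1) (closedBall 0 1) := fun w hw =>
    mem_closedBall_zero_iff.2 ((hφ_le _).trans (mem_closedBall_zero_iff.1 (hmaps hw)))
  calc ‖F z‖ = ‖(φ ∘ F) z‖ := by rw [Function.comp_apply, hφz, RCLike.norm_ofReal, abs_norm]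
    _ ≤ schwarzPickBound ‖(φ ∘ F) 0‖ ‖z‖ :=
        Complex.norm_le_schwarzPickBound_of_mapsTo_ball
          (φ.differentiable.comp_differentiableOn hF) hg hz
    _ ≤ schwarzPickBound ‖F 0‖ ‖z‖ :=
        schwarzPickBound_mono_left (norm_nonneg _) (hφ_le _) (norm_nonneg z) hz.le

end

theorem operator_schwarz_pick_growth_general
    {H : Type*} [NormedAddCommGroup H] [InnerProductSpace ℂ H]
    (f : ℂ → (H →L[ℂ] H))
    (hf : AnalyticOnNhd ℂ f (Metric.ball (0 : ℂ) 1))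
    (hb : ∀ z ∈ Metric.ball (0 : ℂ) 1, ‖f z‖ ≤ 1)
    (z : ℂ) (hz : z ∈ Metric.ball (0 : ℂ) 1) :
    ‖f z‖ ≤ (‖f 0‖ + ‖z‖) / (1 + ‖f 0‖ * ‖z‖) :=
  norm_le_schwarzPickBound_of_mapsTo_ball hf.differentiableOn
    (fun w hw => mem_closedBall_zero_iff.2 (hb w hw)) (mem_ball_zero_iff.1 hz)

/-- Operator valued Schwarz–Pick growth estimate: if `f` is analytic on the unit disk
with values in `𝓑(H)` and `‖f(z)‖ ≤ 1` there, then
`‖f(z)‖ ≤ (‖f(0)‖ + |z|)/(1 + ‖f(0)‖|z|)` for every `z` in the disk. -/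
theorem operator_schwarz_pick_growth
    {H : Type*} [NormedAddCommGroup H] [InnerProductSpace ℂ H] [CompleteSpace H]
    (f : ℂ → (H →L[ℂ] H))
    (hf : AnalyticOnNhd ℂ f (Metric.ball (0 : ℂ) 1))
    (hb : ∀ z ∈ Metric.ball (0 : ℂ) 1, ‖f z‖ ≤ 1)
    (z : ℂ) (hz : z ∈ Metric.ball (0 : ℂ) 1) :
    ‖f z‖ ≤ (‖f 0‖ + ‖z‖) / (1 + ‖f 0‖ * ‖z‖) :=
  operator_schwarz_pick_growth_general f hf hb z hz
end
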